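/- The family of functions {exp(-(ln y - μₙ)²/(2σₙ²)), 1 - Φ((ln y - μₙ)/σₙ) : n = 1,…,k} on (0,∞) is linearly independent provided the pairs (μₙ, σₙ) are pairwise distinct. -/

import Mathlib

/-!
Substitute y = eˣ and differentiate: since Φ' is the Gaussian density, the identity becomes
∑ pₙ(x) exp(-(x - μₙ)²/(2σₙ²)) = 0 with pₙ(x) = -aₙ(x - μₙ)/σₙ² - bₙ/(σₙ√(2π)), and pₙ = 0 forces
aₙ = bₙ = 0. The exponents are quadratics with pairwise distinct leading coefficient pairs
(-1/(2σₙ²), μₙ/σₙ²). Among the nonzero pₙ take the one whose pair is lexicographically largest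
and divide by its exponential: every other term then decays at +∞, so that polynomial tends to 0
and must vanish.
-/

open Real Set

/-- The standard normal CDF. -/
noncomputable def stdNormalCDF (x : ℝ) : ℝ :=
  ∫ u in Iic x, exp (-u ^ 2 / 2) / Real.sqrt (2 * π)

open Filter Topology Polynomial Asymptotics MeasureTheory

theorem exp_quadratic_isBigO_exp_neg_mul {c d : ℝ} (e : ℝ) (h : c < 0 ∨ c = 0 ∧ d < 0) :
    ∃ b > 0, (fun x => exp (c * x ^ 2 + d * x + e)) =O[atTop] fun x => exp (-b * x) := by
  suffices ∃ b > 0, ∀ᶠ x in atTop, c * x ^ 2 + d * x ≤ -b * x by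
    obtain ⟨b, hb, hle⟩ := this
    refine ⟨b, hb, IsBigO.of_bound (exp e) ?_⟩
    filter_upwards [hle] with x hx
    rw [norm_of_nonneg (exp_pos _).le, norm_of_nonneg (exp_pos _).le, ← exp_add]
    exact exp_le_exp.2 (by linarith)
  rcases h with hc | ⟨rfl, hd⟩
  · refine ⟨1, one_pos, ?_⟩
    filter_upwards [eventually_ge_atTop 0, eventually_ge_atTop ((d + 1) / -c)] with x hx₀ hx
    rw [div_le_iff₀ (by linarith)] at hx
    nlinarith
  · exact ⟨-d, by linarith, Eventually.of_forall fun x => by ring_nf; rfl⟩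

namespace Polynomial

theorem tendsto_eval_mul_exp_neg_mul_atTop (P : ℝ[X]) {b : ℝ} (hb : 0 < b) :
    Tendsto (fun x => P.eval x * exp (-b * x)) atTop (𝓝 0) := by
  have hP : (fun x => P.eval x) =O[atTop] fun x => x ^ P.natDegree := by
    simpa using P.isBigO_atTop_of_degree_le (X ^ P.natDegree) (by simp [degree_le_natDegree])
  refine ((hP.trans_isLittleO (isLittleO_pow_exp_pos_mul_atTop _ hb)).tendsto_div_nhds_zero).congr
    fun x => ?_
  rw [neg_mul, exp_neg, div_eq_mul_inv]

theorem tendsto_eval_mul_exp_quadratic_atTop (P : ℝ[X]) {c d : ℝ} (e : ℝ)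
    (h : c < 0 ∨ c = 0 ∧ d < 0) :
    Tendsto (fun x => P.eval x * exp (c * x ^ 2 + d * x + e)) atTop (𝓝 0) := by
  obtain ⟨b, hb, hO⟩ := exp_quadratic_isBigO_exp_neg_mul e h
  exact ((isBigO_refl _ _).mul hO).trans_tendsto (P.tendsto_eval_mul_exp_neg_mul_atTop hb)

theorem eq_zero_of_sum_eval_mul_exp_quadratic_eq_zero {ι : Type*} [Fintype ι] (P : ι → ℝ[X])
    (c d e : ι → ℝ) (hcd : Function.Injective fun n => toLex (c n, d n))
    (h : ∀ x, ∑ n, (P n).eval x * exp (c n * x ^ 2 + d n * x + e n) = 0) (n : ι) : P n = 0 := by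
  classical
  by_contra hn
  obtain ⟨m, hm, hmax⟩ := (Finset.univ.filter fun n => P n ≠ 0).exists_max_image
    (fun n => toLex (c n, d n)) ⟨n, by simpa using hn⟩
  simp only [Finset.mem_filter, Finset.mem_univ, true_and] at hm hmax
  obtain ⟨r, hr⟩ : ∃ r : ι → ℝ → ℝ,
      ∀ n x, r n x = (c n - c m) * x ^ 2 + (d n - d m) * x + (e n - e m) := ⟨_, fun _ _ => rfl⟩
  have hrest : ∀ x, (P m).eval x = -∑ n ∈ Finset.univ.erase m, (P n).eval x * exp (r n x) := by
    intro x
    have hfactor : ∑ n, (P n).eval x * exp (c n * x ^ 2 + d n * x + e n)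
        = ((P m).eval x + ∑ n ∈ Finset.univ.erase m, (P n).eval x * exp (r n x))
          * exp (c m * x ^ 2 + d m * x + e m) := by
      rw [add_mul, Finset.sum_mul, ← Finset.add_sum_erase _ _ (Finset.mem_univ m)]
      congr 1
      refine Finset.sum_congr rfl fun n _ => ?_
      rw [mul_assoc, ← exp_add, hr]
      ring_nf
    have hx := h x
    rw [hfactor] at hx
    linarith [(mul_eq_zero.1 hx).resolve_right (exp_pos _).ne']
  have hdecay : ∀ n ∈ Finset.univ.erase m,
      Tendsto (fun x => (P n).eval x * exp (r n x)) atTop (𝓝 0) := by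
    intro n hnm
    by_cases hPn : P n = 0
    · simp [hPn]
    have hlt : toLex (c n, d n) < toLex (c m, d m) :=
      (hmax n hPn).lt_of_ne (hcd.ne (Finset.ne_of_mem_erase hnm))
    simp only [hr]
    refine (P n).tendsto_eval_mul_exp_quadratic_atTop _ ?_
    rcases Prod.Lex.toLex_lt_toLex.1 hlt with hc | ⟨hc, hd⟩
    · exact Or.inl (by linarith)
    · exact Or.inr ⟨by linarith, by linarith⟩
  have hPm : Tendsto (fun x => (P m).eval x) atTop (𝓝 0) := by
    have := (tendsto_finsetSum _ hdecay).neg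
    rw [Finset.sum_const_zero, neg_zero] at this
    exact this.congr fun x => (hrest x).symm
  exact hm (leadingCoeff_eq_zero.1 ((P m).tendsto_nhds_iff.1 hPm).1)

end Polynomial

theorem integrable_exp_neg_sq_div_two : Integrable fun u : ℝ => exp (-u ^ 2 / 2) := by
  simpa [neg_div, div_eq_inv_mul] using integrable_exp_neg_mul_sq (b := 1 / 2) (by norm_num)

theorem hasDerivAt_stdNormalCDF (x : ℝ) :
    HasDerivAt stdNormalCDF (exp (-x ^ 2 / 2) / √(2 * π)) x := by
  have hint : Integrable fun u : ℝ => exp (-u ^ 2 / 2) / √(2 * π) :=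
    integrable_exp_neg_sq_div_two.div_const _
  have hcont : Continuous fun u : ℝ => exp (-u ^ 2 / 2) / √(2 * π) := by fun_prop
  have hsplit : stdNormalCDF =
      fun x => stdNormalCDF 0 + ∫ u in (0)..x, exp (-u ^ 2 / 2) / √(2 * π) := by
    funext x
    rw [← intervalIntegral.integral_Iic_sub_Iic hint.integrableOn hint.integrableOn]
    simp only [stdNormalCDF]
    ring
  rw [hsplit]
  exact ((hcont.integral_hasStrictDerivAt 0 x).hasDerivAt).const_add _

noncomputable def gaussianTermDerivFactor (μ σ a b : ℝ) : ℝ[X] :=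
  C (-a / σ ^ 2) * (X - C μ) - C (b / (σ * √(2 * π)))

theorem hasDerivAt_gaussian_term (μ σ a b x : ℝ) :
    HasDerivAt
      (fun x => a * exp (-(x - μ) ^ 2 / (2 * σ ^ 2)) + b * (1 - stdNormalCDF ((x - μ) / σ)))
      ((gaussianTermDerivFactor μ σ a b).eval x * exp (-(x - μ) ^ 2 / (2 * σ ^ 2))) x := by
  have hexp : HasDerivAt (fun x => exp (-(x - μ) ^ 2 / (2 * σ ^ 2)))
      (exp (-(x - μ) ^ 2 / (2 * σ ^ 2)) * (-(2 * (x - μ)) / (2 * σ ^ 2))) x := by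
    refine HasDerivAt.exp ?_
    simpa using (((hasDerivAt_id x).sub_const μ).pow 2).neg.div_const (2 * σ ^ 2)
  have hcdf : HasDerivAt (fun x => stdNormalCDF ((x - μ) / σ))
      (exp (-((x - μ) / σ) ^ 2 / 2) / √(2 * π) * (1 / σ)) x :=
    (hasDerivAt_stdNormalCDF _).comp x (((hasDerivAt_id x).sub_const μ).div_const σ)
  refine ((hexp.const_mul a).fun_add ((hcdf.const_sub 1).const_mul b)).congr_deriv ?_
  rw [show -((x - μ) / σ) ^ 2 / 2 = -(x - μ) ^ 2 / (2 * σ ^ 2) by rw [div_pow]; ring]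
  simp only [gaussianTermDerivFactor, eval_sub, eval_mul, eval_C, eval_X]
  ring

theorem gaussianTermDerivFactor_eq_zero_iff {μ σ a b : ℝ} (hσ : σ ≠ 0) :
    gaussianTermDerivFactor μ σ a b = 0 ↔ a = 0 ∧ b = 0 := by
  refine ⟨fun h => ?_, fun ⟨ha, hb⟩ => by simp [gaussianTermDerivFactor, ha, hb]⟩
  have h₀ := congrArg (eval μ) h
  have h₁ := congrArg (eval (μ + 1)) h
  simp only [gaussianTermDerivFactor, eval_sub, eval_mul, eval_C, eval_X, eval_zero] at h₀ h₁
  have hb : b = 0 := by simpa [hσ, (sqrt_pos.2 pi_pos).ne'] using h₀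
  subst hb
  simpa [hσ] using h₁

theorem neg_sq_sub_div_eq_quadratic (x μ : ℝ) {σ : ℝ} (hσ : σ ≠ 0) :
    -(x - μ) ^ 2 / (2 * σ ^ 2) =
      -1 / (2 * σ ^ 2) * x ^ 2 + μ / σ ^ 2 * x + -μ ^ 2 / (2 * σ ^ 2) := by
  field_simp
  ring

theorem eq_of_gaussian_quadratic_coeffs_eq {μ₁ σ₁ μ₂ σ₂ : ℝ} (hσ₁ : 0 < σ₁) (hσ₂ : 0 < σ₂)
    (h : (-1 / (2 * σ₁ ^ 2), μ₁ / σ₁ ^ 2) = (-1 / (2 * σ₂ ^ 2), μ₂ / σ₂ ^ 2)) :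
    (μ₁, σ₁) = (μ₂, σ₂) := by
  obtain ⟨h₂, h₁⟩ := Prod.ext_iff.1 h
  have hσ : σ₁ = σ₂ := by
    field_simp at h₂
    nlinarith
  subst hσ
  simp_all [hσ₁.ne']

/-- If the pairs `(μₙ,σₙ)` (with `σₙ > 0`) are pairwise distinct, then the `2k`
functions `y ↦ exp(-(ln y - μₙ)²/(2σₙ²))` and `y ↦ 1 - Φ((ln y - μₙ)/σₙ)` on
`(0,∞)` are linearly independent: any vanishing linear combination has all
coefficients zero. -/
theorem lognormal_family_linear_independent
    (k : ℕ) (μ σ : Fin k → ℝ) (hσ : ∀ n, 0 < σ n)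
    (hdist : ∀ m n : Fin k, m ≠ n → (μ m, σ m) ≠ (μ n, σ n))
    (a b : Fin k → ℝ)
    (hvanish : ∀ y : ℝ, 0 < y →
      (∑ n, (a n * exp (-(Real.log y - μ n) ^ 2 / (2 * (σ n) ^ 2)) +
        b n * (1 - stdNormalCDF ((Real.log y - μ n) / σ n)))) = 0) :
    ∀ n, a n = 0 ∧ b n = 0 := by
  have hF : (fun x => ∑ n, (a n * exp (-(x - μ n) ^ 2 / (2 * σ n ^ 2)) +
      b n * (1 - stdNormalCDF ((x - μ n) / σ n)))) = fun _ => 0 := by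
    funext x
    simpa using hvanish (exp x) (exp_pos x)
  have hderiv : ∀ x, ∑ n, (gaussianTermDerivFactor (μ n) (σ n) (a n) (b n)).eval x *
      exp (-1 / (2 * σ n ^ 2) * x ^ 2 + μ n / σ n ^ 2 * x + -μ n ^ 2 / (2 * σ n ^ 2)) = 0 := by
    intro x
    have hsum := HasDerivAt.fun_sum fun n (_ : n ∈ Finset.univ) =>
      hasDerivAt_gaussian_term (μ n) (σ n) (a n) (b n) x
    rw [hF] at hsum
    simpa only [neg_sq_sub_div_eq_quadratic x _ (hσ _).ne'] using
      hsum.unique (hasDerivAt_const x 0)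
  have hinj : Function.Injective fun n => toLex (-1 / (2 * σ n ^ 2), μ n / σ n ^ 2) := by
    intro m n h
    by_contra hmn
    exact hdist m n hmn (eq_of_gaussian_quadratic_coeffs_eq (hσ m) (hσ n) h)
  exact fun n => (gaussianTermDerivFactor_eq_zero_iff (hσ n).ne').1
    (eq_zero_of_sum_eval_mul_exp_quadratic_eq_zero _ _ _ _ hinj hderiv n)
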